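/- arXiv:1808.01281 — 6 statements merged into one kernel-verified Lean document; each statement's English description precedes it below -/
import Mathlib

section
/- For every permutation w in the symmetric group S_n, there exists a unique reduced word for w that is super-Yamanouchi, i.e., whose run decomposition into maximal decreasing (right-to-left) runs consists of integer intervals with strictly decreasing minima from right to left. -/
/-- The simple transposition `s i` of `i` and `i+1` (0-indexed) in `S_n`,
the identity if out of range. -/
def st (n : ℕ) (i : ℕ) : Equiv.Perm (Fin n) :=
  if h : i + 1 < n then Equiv.swap ⟨i, Nat.lt_of_succ_lt h⟩ ⟨i + 1, h⟩ else 1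

/-- The Coxeter length of `w`: the number of inversion pairs. -/
def invCount {n : ℕ} (w : Equiv.Perm (Fin n)) : ℕ :=
  (Finset.univ.filter fun p : Fin n × Fin n => p.1 < p.2 ∧ w p.2 < w p.1).card

/-- The permutation `s_{ρ_ℓ} ⋯ s_{ρ_1}` of a word `L = (ρ_ℓ, …, ρ_1)`,
where `s_{ρ_1}` is applied first (by swapping positions of the one-line notation). -/
def wordProd (n : ℕ) (L : List ℕ) : Equiv.Perm (Fin n) :=
  (L.reverse.map (st n)).prod

/-- `L = (ρ_ℓ, …, ρ_1)` is a reduced word for `w`. -/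
def IsReducedWord (n : ℕ) (w : Equiv.Perm (Fin n)) (L : List ℕ) : Prop :=
  (∀ a ∈ L, a + 1 < n) ∧ wordProd n L = w ∧ L.length = invCount w

/-- A word is super-Yamanouchi if its run decomposition into maximal runs
(increasing left to right as displayed, i.e. decreasing right to left) consists of
intervals of consecutive integers whose minima strictly decrease from left to right
(i.e. `min ρ^(k) > ⋯ > min ρ^(1)`).  Since runs here are intervals with strictly
decreasing minima, such a decomposition is automatically the maximal run decomposition. -/
def SuperYamanouchi (L : List ℕ) : Prop :=
  ∃ R : List (List ℕ),
    R.flatten = L ∧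
    (∀ r ∈ R, r ≠ [] ∧ r.Chain' (fun a b => b = a + 1)) ∧
    (R.map fun r => r.headD 0).Chain' (fun a b => b < a)

/-!
If `w ≠ 1`, let `a` be the least point moved by `w`, so that `w a = a + m` with `m > 0`. The
product `c = s_{a+m-1} ⋯ s_a` of the run `a, a+1, …, a+m-1` fixes every point below `a` and sends
`a` to `a + m`, hence `c⁻¹ w` fixes `0, …, a`. Left multiplication by `c` adds exactly `m`
inversions to a permutation fixing `0, …, a`, so appending this run to the super-Yamanouchi reduced
word of `c⁻¹ w` (all of whose letters exceed `a`) gives one of `w`. Conversely, in a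
super-Yamanouchi reduced word of `w` the last run `a, …, a+m-1` is forced: `a` is the least point
moved by `w` and `a + m = w a`. Induction on the length gives existence and uniqueness.
-/

section Transpositions

variable {n i : ℕ}

lemma st_apply_val (h : i + 1 < n) (x : Fin n) :
    (st n i x : ℕ) = if (x : ℕ) = i then i + 1 else if (x : ℕ) = i + 1 then i else x := by
  rw [st, dif_pos h, Equiv.swap_apply_def]
  split_ifs <;> simp_all [Fin.ext_iff]

lemma st_apply_of_ne {x : Fin n} (h₁ : (x : ℕ) ≠ i) (h₂ : (x : ℕ) ≠ i + 1) : st n i x = x := by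
  by_cases h : i + 1 < n
  · exact Fin.ext (by rw [st_apply_val h, if_neg h₁, if_neg h₂])
  · rw [st, dif_neg h, Equiv.Perm.one_apply]

lemma st_apply_left (h : i + 1 < n) : st n i ⟨i, by omega⟩ = ⟨i + 1, h⟩ := by
  rw [st, dif_pos h, Equiv.swap_apply_left]

lemma st_apply_right (h : i + 1 < n) : st n i ⟨i + 1, h⟩ = ⟨i, by omega⟩ := by
  rw [st, dif_pos h, Equiv.swap_apply_right]

lemma st_lt_st_iff {x y : Fin n} (hxy : ¬((x : ℕ) = i ∧ (y : ℕ) = i + 1))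
    (hyx : ¬((y : ℕ) = i ∧ (x : ℕ) = i + 1)) : st n i x < st n i y ↔ x < y := by
  by_cases h : i + 1 < n
  · rw [Fin.lt_def, Fin.lt_def, st_apply_val h, st_apply_val h]
    split_ifs <;> omega
  · rw [st, dif_neg h, Equiv.Perm.one_apply, Equiv.Perm.one_apply]

end Transpositions

section WordProduct

variable {n : ℕ}

lemma wordProd_append (A B : List ℕ) : wordProd n (A ++ B) = wordProd n B * wordProd n A := by
  simp [wordProd]

lemma wordProd_concat (L : List ℕ) (x : ℕ) : wordProd n (L ++ [x]) = st n x * wordProd n L := by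
  simp [wordProd]

lemma wordProd_apply_of_le {L : List ℕ} {b : ℕ} (hL : ∀ l ∈ L, b < l) {x : Fin n}
    (hx : (x : ℕ) ≤ b) : wordProd n L x = x := by
  induction L using List.reverseRecOn with
  | nil => rfl
  | append_singleton L l ih =>
    have hl := hL l (by simp)
    rw [wordProd_concat, Equiv.Perm.mul_apply, ih (fun l hl => hL l (by simp [hl])),
      st_apply_of_ne (by omega) (by omega)]

lemma wordProd_range'_apply_self {a m : ℕ} (h : a + m < n) :
    wordProd n (List.range' a m) ⟨a, by omega⟩ = ⟨a + m, h⟩ := by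
  induction m with
  | zero => rfl
  | succ m ih =>
    rw [List.range'_1_concat, wordProd_concat, Equiv.Perm.mul_apply, ih (by omega)]
    exact st_apply_left h

variable {a m : ℕ}

lemma wordProd_range'_apply_of_lt {x : Fin n} (hx : (x : ℕ) < a) :
    wordProd n (List.range' a m) x = x :=
  wordProd_apply_of_le (b := x) (fun l hl => by rw [List.mem_range'_1] at hl; omega) le_rfl

variable {u : Equiv.Perm (Fin n)}

lemma wordProd_range'_mul_apply_of_lt (hu : ∀ x : Fin n, (x : ℕ) ≤ a → u x = x) {x : Fin n}
    (hx : (x : ℕ) < a) : (wordProd n (List.range' a m) * u) x = x := by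
  rw [Equiv.Perm.mul_apply, hu x hx.le, wordProd_range'_apply_of_lt hx]

lemma wordProd_range'_mul_apply_self (hu : ∀ x : Fin n, (x : ℕ) ≤ a → u x = x)
    (h : a + m < n) : (wordProd n (List.range' a m) * u) ⟨a, by omega⟩ = ⟨a + m, h⟩ := by
  rw [Equiv.Perm.mul_apply, hu _ le_rfl, wordProd_range'_apply_self h]

end WordProduct

section Inversions

variable {n : ℕ}

lemma invCount_one : invCount (1 : Equiv.Perm (Fin n)) = 0 := by
  rw [invCount, Finset.card_eq_zero, Finset.filter_eq_empty_iff]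
  exact fun p _ h => lt_asymm h.1 h.2

/-- `s_i` preserves the relative order of every pair of values other than `i, i + 1`, so the only
new inversion of `s_i * u` is `(u⁻¹ i, u⁻¹ (i + 1))`. -/
lemma invCount_st_mul {i : ℕ} (h : i + 1 < n) {u : Equiv.Perm (Fin n)}
    (hu : u⁻¹ ⟨i, by omega⟩ < u⁻¹ ⟨i + 1, h⟩) : invCount (st n i * u) = invCount u + 1 := by
  set p := u⁻¹ ⟨i, by omega⟩
  set q := u⁻¹ ⟨i + 1, h⟩
  have hp (x : Fin n) : (u x : ℕ) = i ↔ x = p := by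
    rw [Equiv.Perm.eq_inv_iff_eq, Fin.ext_iff]
  have hq (x : Fin n) : (u x : ℕ) = i + 1 ↔ x = q := by
    rw [Equiv.Perm.eq_inv_iff_eq, Fin.ext_iff]
  have hnot : (p, q) ∉ Finset.univ.filter fun x : Fin n × Fin n => x.1 < x.2 ∧ u x.2 < u x.1 := by
    simp [p, q, Fin.mk_lt_mk]
  rw [invCount, invCount, ← Finset.card_insert_of_notMem hnot]
  congr 1
  ext ⟨x, y⟩
  simp only [Finset.mem_filter, Finset.mem_univ, true_and, Finset.mem_insert, Prod.mk.injEq]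
  rw [Equiv.Perm.mul_apply, Equiv.Perm.mul_apply]
  by_cases hxy : x = p ∧ y = q
  · obtain ⟨rfl, rfl⟩ := hxy
    exact iff_of_true ⟨hu, by simp [p, q, st_apply_left h, st_apply_right h]⟩ (.inl ⟨rfl, rfl⟩)
  · simp only [hxy, false_or, and_congr_right_iff]
    intro hlt
    refine st_lt_st_iff ?_ ?_
    · rw [hp, hq]
      rintro ⟨rfl, rfl⟩
      exact lt_asymm hlt hu
    · rwa [hp, hq]

lemma invCount_range'_mul {a m : ℕ} {u : Equiv.Perm (Fin n)}
    (hu : ∀ x : Fin n, (x : ℕ) ≤ a → u x = x) (h : a + m < n) :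
    invCount (wordProd n (List.range' a m) * u) = invCount u + m := by
  induction m with
  | zero => simp [wordProd]
  | succ m ih =>
    set v := wordProd n (List.range' a m) * u
    have hv_inv : v⁻¹ ⟨a + m, by omega⟩ = ⟨a, by omega⟩ := by
      rw [Equiv.Perm.inv_eq_iff_eq, wordProd_range'_mul_apply_self hu]
    -- `v` fixes every point below `a` and sends `a` to `a + m`, so it cannot send a point `≤ a`
    -- to `a + m + 1`.
    have hv_lt : v⁻¹ ⟨a + m, by omega⟩ < v⁻¹ ⟨a + m + 1, h⟩ := by
      rw [hv_inv, Fin.lt_def]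
      by_contra! hle
      set y := v⁻¹ ⟨a + m + 1, h⟩ with hy
      have hvy : v y = ⟨a + m + 1, h⟩ := (Equiv.Perm.inv_eq_iff_eq.1 hy.symm).symm
      rcases hle.lt_or_eq with hlt | heq
      · rw [wordProd_range'_mul_apply_of_lt hu hlt] at hvy
        rw [hvy] at hlt
        exact absurd hlt (by dsimp only; omega)
      · rw [show y = ⟨a, by omega⟩ from Fin.ext heq, wordProd_range'_mul_apply_self hu (by omega)]
          at hvy
        simp at hvy
    rw [List.range'_1_concat, wordProd_concat, mul_assoc, invCount_st_mul (i := a + m) h hv_lt,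
      ih (by omega), add_assoc]

end Inversions

lemma List.IsChain.eq_range'_succ {a : ℕ} {t : List ℕ}
    (h : (a :: t).IsChain fun x y => y = x + 1) : a :: t = List.range' a (t.length + 1) := by
  induction t generalizing a with
  | nil => rfl
  | cons b t ih =>
    rw [List.isChain_cons_cons] at h
    obtain ⟨rfl, h⟩ := h
    conv_lhs => rw [ih h]
    rfl

lemma SuperYamanouchi.nil : SuperYamanouchi [] :=
  ⟨[], rfl, by simp, List.IsChain.nil⟩

lemma SuperYamanouchi.append_range' {L : List ℕ} {a m : ℕ} (hL : SuperYamanouchi L)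
    (hlt : ∀ l ∈ L, a < l) (hm : m ≠ 0) : SuperYamanouchi (L ++ List.range' a m) := by
  obtain ⟨R, rfl, hruns, hheads⟩ := hL
  refine ⟨R ++ [List.range' a m], by simp, ?_, ?_⟩
  · simp only [List.mem_append, List.mem_singleton]
    rintro r (hr | rfl)
    · exact hruns r hr
    · exact ⟨by simpa using hm, List.isChain_range' a m 1⟩
  · have hhead : (List.range' a m).headD 0 = a := by
      obtain ⟨k, rfl⟩ := Nat.exists_eq_succ_of_ne_zero hm
      rfl
    refine (List.isChain_iff_pairwise.2 ?_)
    rw [List.map_append, List.pairwise_append]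
    refine ⟨List.isChain_iff_pairwise.1 hheads, by simp, ?_⟩
    simp only [List.mem_map, List.map_cons, List.map_nil, List.mem_singleton, hhead]
    rintro _ ⟨r, hr, rfl⟩ _ rfl
    obtain ⟨c, t, rfl⟩ := List.exists_cons_of_ne_nil (hruns r hr).1
    exact hlt c (List.mem_flatten.2 ⟨_, hr, List.mem_cons_self⟩)

lemma SuperYamanouchi.eq_append_range' {L : List ℕ} (hL : SuperYamanouchi L) (hne : L ≠ []) :
    ∃ L' a m, m ≠ 0 ∧ L = L' ++ List.range' a m ∧ SuperYamanouchi L' ∧ ∀ l ∈ L', a < l := by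
  obtain ⟨R, rfl, hruns, hheads⟩ := hL
  obtain ⟨R', r, hR⟩ := List.eq_nil_or_concat R |>.resolve_left (by rintro rfl; simp at hne)
  rw [List.concat_eq_append] at hR
  subst hR
  obtain ⟨hr_ne, hr_chain⟩ := hruns r (by simp)
  obtain ⟨a, t, rfl⟩ := List.exists_cons_of_ne_nil hr_ne
  have hpair := List.isChain_iff_pairwise.1 hheads
  rw [List.map_append, List.pairwise_append] at hpair
  refine ⟨R'.flatten, a, t.length + 1, by simp, by simp [hr_chain.eq_range'_succ], ?_, ?_⟩
  · exact ⟨R', rfl, fun r hr => hruns r (by simp [hr]),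
      List.isChain_iff_pairwise.2 hpair.1⟩
  · intro l hl
    obtain ⟨q, hq, hlq⟩ := List.mem_flatten.1 hl
    obtain ⟨hq_ne, hq_chain⟩ := hruns q (by simp [hq])
    obtain ⟨c, s, rfl⟩ := List.exists_cons_of_ne_nil hq_ne
    have hac : a < c := hpair.2.2 c (List.mem_map.2 ⟨_, hq, rfl⟩) a (by simp)
    rw [hq_chain.eq_range'_succ, List.mem_range'_1] at hlq
    omega

lemma exists_lt_apply_of_ne_one {α : Type*} [LinearOrder α] [WellFoundedLT α]
    {w : Equiv.Perm α} (hw : w ≠ 1) : ∃ A, (∀ x < A, w x = x) ∧ A < w A := by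
  have hmoved : {x | w x ≠ x}.Nonempty := by
    by_contra! h
    exact hw (Equiv.ext fun x => by simpa using Set.eq_empty_iff_forall_notMem.1 h x)
  obtain ⟨A, hA, hmin⟩ := wellFounded_lt.has_min _ hmoved
  have hfix : ∀ x < A, w x = x := fun x hx => by_contra fun h => hmin x h hx
  exact ⟨A, hfix, lt_of_le_of_ne (not_lt.1 fun h => hA (w.injective (hfix _ h))) (Ne.symm hA)⟩

section ReducedWords

variable {n : ℕ} {w : Equiv.Perm (Fin n)}

lemma isReducedWord_append_range'_iff {L : List ℕ} {a m : ℕ} (hL : ∀ l ∈ L, a < l)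
    (h : a + m < n) : IsReducedWord n w (L ++ List.range' a m) ↔
      IsReducedWord n ((wordProd n (List.range' a m))⁻¹ * w) L := by
  have hletters : (∀ l ∈ L ++ List.range' a m, l + 1 < n) ↔ ∀ l ∈ L, l + 1 < n := by
    simp only [List.mem_append, List.mem_range'_1]
    exact ⟨fun h' l hl => h' l (.inl hl), fun h' l hl => hl.elim (h' l) (by omega)⟩
  rw [IsReducedWord, IsReducedWord, hletters, wordProd_append, ← eq_inv_mul_iff_mul_eq]
  refine and_congr_right fun _ => and_congr_right fun hw => ?_
  have hcount : invCount w = invCount (wordProd n L) + m := by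
    rw [← invCount_range'_mul (fun x hx => wordProd_apply_of_le hL hx) h, hw, mul_inv_cancel_left]
  rw [List.length_append, List.length_range', hcount, hw]
  omega

lemma IsReducedWord.apply_of_append_range' {L : List ℕ} {a m : ℕ}
    (hred : IsReducedWord n w (L ++ List.range' a m)) (hL : ∀ l ∈ L, a < l) (hm : m ≠ 0) :
    ∃ h : a + m < n, (∀ x : Fin n, (x : ℕ) < a → w x = x) ∧ w ⟨a, by omega⟩ = ⟨a + m, h⟩ := by
  obtain ⟨hletters, hw, -⟩ := hred
  have h : a + m < n := by
    have := hletters (a + m - 1) (by simp only [List.mem_append, List.mem_range'_1]; omega)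
    omega
  rw [wordProd_append] at hw
  subst hw
  have hfix (x : Fin n) (hx : (x : ℕ) ≤ a) := wordProd_apply_of_le hL hx
  exact ⟨h, fun x hx => wordProd_range'_mul_apply_of_lt hfix hx,
    wordProd_range'_mul_apply_self hfix h⟩

lemma IsReducedWord.forall_lt_of_superYamanouchi {L : List ℕ} {b : ℕ}
    (hred : IsReducedWord n w L) (hsy : SuperYamanouchi L)
    (hfix : ∀ x : Fin n, (x : ℕ) ≤ b → w x = x) : ∀ l ∈ L, b < l := by
  rcases eq_or_ne L [] with rfl | hne
  · simp
  obtain ⟨L', a, m, hm, rfl, -, hlt⟩ := hsy.eq_append_range' hne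
  obtain ⟨h, -, hwa⟩ := hred.apply_of_append_range' hlt hm
  have hba : b < a := by
    by_contra! hab
    exact hm (by simpa using hwa.symm.trans (hfix _ hab))
  intro l hl
  rw [List.mem_append, List.mem_range'_1] at hl
  rcases hl with hl | hl
  · exact hba.trans (hlt l hl)
  · omega

theorem exists_isReducedWord_superYamanouchi (w : Equiv.Perm (Fin n)) :
    ∃ L, IsReducedWord n w L ∧ SuperYamanouchi L := by
  induction hN : invCount w using Nat.strong_induction_on generalizing w with
  | _ N ih =>
  rcases eq_or_ne w 1 with rfl | hw
  · exact ⟨[], ⟨by simp, rfl, invCount_one.symm⟩, .nil⟩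
  obtain ⟨A, hfix, hA⟩ := exists_lt_apply_of_ne_one hw
  set a := (A : ℕ)
  set m := (w A : ℕ) - a
  set c := wordProd n (List.range' a m)
  have h : a + m < n := by have := (w A).isLt; omega
  have hm : m ≠ 0 := by rw [Fin.lt_def] at hA; omega
  have hu : ∀ x : Fin n, (x : ℕ) ≤ a → (c⁻¹ * w) x = x := by
    intro x hx
    rw [Equiv.Perm.mul_apply, Equiv.Perm.inv_eq_iff_eq]
    rcases hx.lt_or_eq with hx | hx
    · rw [hfix x hx, wordProd_range'_apply_of_lt hx]
    · obtain rfl : x = A := Fin.ext hx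
      change w x = c ⟨a, x.isLt⟩
      rw [wordProd_range'_apply_self h]
      exact Fin.ext (Nat.add_sub_cancel' hA.le).symm
  have hcount : invCount w = invCount (c⁻¹ * w) + m := by
    conv_lhs => rw [← mul_inv_cancel_left c w]
    exact invCount_range'_mul hu h
  obtain ⟨L, hred, hsy⟩ := ih _ (by omega) (c⁻¹ * w) rfl
  have hlt := hred.forall_lt_of_superYamanouchi hsy hu
  exact ⟨L ++ List.range' a m, (isReducedWord_append_range'_iff hlt h).2 hred,
    hsy.append_range' hlt hm⟩

theorem IsReducedWord.eq_of_superYamanouchi {L M : List ℕ} (hL : IsReducedWord n w L)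
    (hsL : SuperYamanouchi L) (hM : IsReducedWord n w M) (hsM : SuperYamanouchi M) : L = M := by
  induction hN : L.length using Nat.strong_induction_on generalizing w L M with
  | _ N ih =>
  have hlen : L.length = M.length := hL.2.2.trans hM.2.2.symm
  rcases eq_or_ne L [] with rfl | hne
  · exact (List.length_eq_zero_iff.1 hlen.symm).symm
  have hne' : M ≠ [] := by rintro rfl; exact hne (List.length_eq_zero_iff.1 hlen)
  obtain ⟨L', a, m, hm, rfl, hsL', hltL⟩ := hsL.eq_append_range' hne
  obtain ⟨M', b, k, hk, rfl, hsM', hltM⟩ := hsM.eq_append_range' hne'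
  obtain ⟨h, hfixL, hwa⟩ := hL.apply_of_append_range' hltL hm
  obtain ⟨_, hfixM, hwb⟩ := hM.apply_of_append_range' hltM hk
  -- both `a` and `b` are the least point moved by `w`
  have hab : a = b := by
    by_contra hne
    rcases Nat.lt_or_gt_of_ne hne with hlt | hlt
    · exact hm (by simpa using hwa.symm.trans (hfixM _ hlt))
    · exact hk (by simpa using hwb.symm.trans (hfixL _ hlt))
  subst hab
  obtain rfl : m = k := by simpa using congrArg Fin.val (hwa.symm.trans hwb)
  rw [isReducedWord_append_range'_iff hltL h] at hL
  rw [isReducedWord_append_range'_iff hltM h] at hM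
  rw [ih L'.length (by rw [← hN, List.length_append, List.length_range']; omega) hL hsL' hM hsM'
    rfl]

end ReducedWords

/-- For every permutation `w` there is a unique super-Yamanouchi reduced word. -/
theorem exists_unique_superYamanouchi_reduced_word (n : ℕ) (w : Equiv.Perm (Fin n)) :
    ∃! L : List ℕ, IsReducedWord n w L ∧ SuperYamanouchi L := by
  obtain ⟨L, hL⟩ := exists_isReducedWord_superYamanouchi w
  exact ⟨L, hL, fun M hM => hM.1.eq_of_superYamanouchi hM.2 hL.1 hL.2⟩
end

section
/- Let w ∈ S_n with ℓ(w) > 0, let i be the maximal index with w_i > w_{i+1}, and let j be the minimal index with w_i < w_j (or n+1 if none exists). Then v = s_{j-2}···s_{i+1}s_i w satisfies ℓ(v) = ℓ(w) − (j − i − 1). -/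
/-!
Write `c_t = s_i s_{i+1} ⋯ s_{i+t-1}`. As a function, `c_t` sends position `i + t` to `i` and
fixes every position above `i + t`, so `w c_t` has the entry `w_i` in position `i + t` and the
untouched entry `w_{i+t+1}` right after it. By minimality of `j`, every entry `w_k` with
`i < k < j` is smaller than `w_i`, so as long as `i + t + 1 < j` this is a descent of `w c_t`,
and multiplying on the right by the adjacent transposition `s_{i+t}` at a descent removes
exactly one inversion. Doing this `j - i - 1` times gives the claim.
-/

open Equiv Finset

section Inversions

variable {n : ℕ}

def inversions (w : Perm (Fin n)) : Finset (Fin n × Fin n) :=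
  univ.filter fun p => p.1 < p.2 ∧ w p.2 < w p.1

lemma mem_inversions {w : Perm (Fin n)} {p : Fin n × Fin n} :
    p ∈ inversions w ↔ p.1 < p.2 ∧ w p.2 < w p.1 := by
  simp [inversions]

lemma invCount_eq_card_inversions (w : Perm (Fin n)) : invCount w = #(inversions w) := rfl

lemma swap_apply_lt_swap_apply_iff {a b : Fin n} (hab : (a : ℕ) + 1 = b) {x y : Fin n}
    (hxy : ¬(x = a ∧ y = b)) (hyx : ¬(x = b ∧ y = a)) :
    swap a b x < swap a b y ↔ x < y := by
  rw [swap_apply_def, swap_apply_def]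
  simp only [Fin.ext_iff] at hxy hyx
  split_ifs <;> simp only [Fin.lt_def, Fin.ext_iff] at * <;> omega

lemma inversions_mul_swap_map {u : Perm (Fin n)} {a b : Fin n} (hab : (a : ℕ) + 1 = b)
    (hd : u b < u a) :
    (inversions (u * swap a b)).map (prodCongr (swap a b) (swap a b)).toEmbedding
      = (inversions u).erase (a, b) := by
  ext ⟨x, y⟩
  have hlt : a < b := Fin.lt_def.2 (by omega)
  simp only [mem_map_equiv, prodCongr_symm, symm_swap, prodCongr_apply, Prod.map,
    mem_inversions, Perm.mul_apply, swap_apply_self, mem_erase, ne_eq, Prod.mk.injEq]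
  by_cases hxy : x = a ∧ y = b
  · obtain ⟨rfl, rfl⟩ := hxy
    simp [hlt.not_gt]
  by_cases hyx : x = b ∧ y = a
  · obtain ⟨rfl, rfl⟩ := hyx
    simp [hd.not_gt]
  rw [swap_apply_lt_swap_apply_iff hab hxy hyx]
  tauto

lemma invCount_mul_swap_add_one {u : Perm (Fin n)} {a b : Fin n} (hab : (a : ℕ) + 1 = b)
    (hd : u b < u a) : invCount (u * swap a b) + 1 = invCount u := by
  have hlt : a < b := Fin.lt_def.2 (by omega)
  have hmem : (a, b) ∈ inversions u := mem_inversions.2 ⟨hlt, hd⟩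
  rw [invCount_eq_card_inversions, invCount_eq_card_inversions, ← card_map,
    inversions_mul_swap_map hab hd, card_erase_add_one hmem]

end Inversions

section SimpleTranspositions

variable {n : ℕ}

lemma st_eq_swap {k : ℕ} (hk : k + 1 < n) :
    st n k = swap ⟨k, Nat.lt_of_succ_lt hk⟩ ⟨k + 1, hk⟩ :=
  dif_pos hk

lemma st_apply_of_ne_s5 {k : ℕ} {x : Fin n} (hk : (x : ℕ) ≠ k) (hk' : (x : ℕ) ≠ k + 1) :
    st n k x = x := by
  unfold st
  split_ifs
  · exact swap_apply_of_ne_of_ne (by simpa [Fin.ext_iff]) (by simpa [Fin.ext_iff])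
  · rfl

lemma invCount_mul_st_add_one {u : Perm (Fin n)} {k : ℕ} (hk : k + 1 < n)
    (hd : u ⟨k + 1, hk⟩ < u ⟨k, Nat.lt_of_succ_lt hk⟩) :
    invCount (u * st n k) + 1 = invCount u := by
  rw [st_eq_swap hk]
  exact invCount_mul_swap_add_one rfl hd

lemma prod_map_st_range'_succ (i t : ℕ) :
    ((List.range' i (t + 1)).map (st n)).prod
      = ((List.range' i t).map (st n)).prod * st n (i + t) := by
  simp [List.range'_1_concat]

lemma prod_map_st_range'_apply_of_lt (i t : ℕ) {x : Fin n} (hx : i + t < x) :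
    ((List.range' i t).map (st n)).prod x = x := by
  induction t with
  | zero => simp
  | succ t ih =>
    rw [prod_map_st_range'_succ, Perm.mul_apply, st_apply_of_ne_s5 (by omega) (by omega)]
    exact ih (by omega)

lemma prod_map_st_range'_apply_top (i t : ℕ) (h : i + t < n) :
    ((List.range' i t).map (st n)).prod ⟨i + t, h⟩ = ⟨i, by omega⟩ := by
  induction t with
  | zero => simp
  | succ t ih =>
    have hswap : st n (i + t) ⟨i + (t + 1), h⟩ = ⟨i + t, by omega⟩ := by
      rw [st_eq_swap (by omega)]
      exact swap_apply_right _ _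
    rw [prod_map_st_range'_succ, Perm.mul_apply, hswap]
    exact ih (by omega)

lemma invCount_mul_prod_map_st_range'_add {w : Perm (Fin n)} {i t : ℕ} (h : i + t < n)
    (hsmall : ∀ k (hk : k < n), i < k → k ≤ i + t → w ⟨k, hk⟩ < w ⟨i, by omega⟩) :
    invCount (w * ((List.range' i t).map (st n)).prod) + t = invCount w := by
  induction t with
  | zero => simp
  | succ t ih =>
    set u := w * ((List.range' i t).map (st n)).prod
    have hnext : u ⟨i + t + 1, h⟩ = w ⟨i + t + 1, h⟩ := by
      rw [Perm.mul_apply, prod_map_st_range'_apply_of_lt i t (by simp)]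
    have htop : u ⟨i + t, by omega⟩ = w ⟨i, by omega⟩ := by
      rw [Perm.mul_apply, prod_map_st_range'_apply_top]
    have hd : u ⟨i + t + 1, h⟩ < u ⟨i + t, by omega⟩ := by
      rw [hnext, htop]
      exact hsmall _ h (by omega) (by omega)
    have hstep := invCount_mul_st_add_one (by omega) hd
    have hprev := ih (by omega) fun k hk hik _ ↦ hsmall k hk hik (by omega)
    rw [prod_map_st_range'_succ, ← mul_assoc]
    change invCount (u * st n (i + t)) + (t + 1) = invCount w
    omega

end SimpleTranspositions

theorem length_after_removing_last_descent_general (n : ℕ) (w : Equiv.Perm (Fin n)) (i j : ℕ)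
    (hi : i + 1 < n)
    (hjn : j ≤ n)
    (hjmin : ∀ k, ∀ hk : k < n, i < k → w ⟨i, Nat.lt_of_succ_lt hi⟩ < w ⟨k, hk⟩ → j ≤ k) :
    invCount (w * ((List.range' i (j - 1 - i)).map (st n)).prod) + (j - i - 1)
      = invCount w := by
  have hsmall : ∀ k (hk : k < n), i < k → k ≤ i + (j - 1 - i) →
      w ⟨k, hk⟩ < w ⟨i, Nat.lt_of_succ_lt hi⟩ := by
    intro k hk hik hkj
    refine lt_of_le_of_ne (not_lt.1 fun h ↦ ?_) fun h ↦ ?_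
    · have := hjmin k hk hik h
      omega
    · have := Fin.ext_iff.1 (w.injective h)
      simp only at this
      omega
  rw [show j - i - 1 = j - 1 - i by omega]
  exact invCount_mul_prod_map_st_range'_add (by omega) hsmall

/-- (0-indexed version.)  Let `i` be the maximal position with `w i > w (i+1)` and let
`j` be the minimal position with `i < j` and `w i < w j` (and `j = n` if none exists).
Then `v = s_{j-2} ⋯ s_{i+1} s_i w` (the `s_k` successively swapping the entries in
positions `k, k+1` of the one-line notation, i.e. `v = w * s_i * s_{i+1} * ⋯ * s_{j-2}`
as functions) satisfies `ℓ(v) = ℓ(w) - (j - i - 1)`. -/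
theorem length_after_removing_last_descent (n : ℕ) (w : Equiv.Perm (Fin n)) (i j : ℕ)
    (hi : i + 1 < n)
    (hpos : 0 < invCount w)
    (hdesc : w ⟨i + 1, hi⟩ < w ⟨i, Nat.lt_of_succ_lt hi⟩)
    (hmax : ∀ k, ∀ hk : k + 1 < n, w ⟨k + 1, hk⟩ < w ⟨k, Nat.lt_of_succ_lt hk⟩ → k ≤ i)
    (hij : i < j) (hjn : j ≤ n)
    (hjval : ∀ h : j < n, w ⟨i, Nat.lt_of_succ_lt hi⟩ < w ⟨j, h⟩)
    (hjmin : ∀ k, ∀ hk : k < n, i < k → w ⟨i, Nat.lt_of_succ_lt hi⟩ < w ⟨k, hk⟩ → j ≤ k) :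
    invCount (w * ((List.range' i (j - 1 - i)).map (st n)).prod) + (j - i - 1)
      = invCount w :=
  length_after_removing_last_descent_general n w i j hi hjn hjmin
end

section
/- If a standard balanced tableau R on the Rothe diagram of w has entries i and i+1 in different rows and different columns, then the filling obtained by exchanging i and i+1 is again a standard balanced tableau on the same diagram. -/
/-- The Rothe diagram of `w` (0-indexed): the cells `(i, w j)` for inversions `i < j`,
`w j < w i`, as a subset of `ℕ × ℕ` (first coordinate the row, drawn with row `0` at the
bottom so that "above" means larger first coordinate; second coordinate the column). -/
def RotheD (n : ℕ) (w : Equiv.Perm (Fin n)) : Finset (ℕ × ℕ) :=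
  (Finset.univ.filter fun p : Fin n × Fin n => p.1 < p.2 ∧ w p.2 < w p.1).image
    fun p => ((p.1 : ℕ), (w p.2 : ℕ))

/-- A standard balanced tableau on a diagram `D`: a bijective filling of the cells of `D`
by `1, …, |D|` such that for every cell, the number of larger entries to its right in its
row equals the number of smaller entries above it in its column. -/
def IsSBT (D : Finset (ℕ × ℕ)) (T : ℕ × ℕ → ℕ) : Prop :=
  Set.InjOn T ↑D ∧ D.image T = Finset.Icc 1 D.card ∧
  ∀ x ∈ D, (D.filter fun y => y.1 = x.1 ∧ x.2 < y.2 ∧ T x < T y).card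
    = (D.filter fun y => y.2 = x.2 ∧ x.1 < y.1 ∧ T y < T x).card

/-! Exchanging `i` and `i + 1` changes the relative order of no pair of entries except the pair
of cells carrying `i` and `i + 1`. Since these cells share neither a row nor a column, every
count in the balance condition compares only pairs whose order is preserved. -/

open Equiv Finset

lemma swap_succ_lt_swap_succ_iff {a b i : ℕ} (h₁ : ¬(a = i ∧ b = i + 1))
    (h₂ : ¬(a = i + 1 ∧ b = i)) : swap i (i + 1) a < swap i (i + 1) b ↔ a < b := by
  simp only [swap_apply_def]
  split_ifs <;> omega

lemma Finset.image_swap_of_mem {α : Type*} [DecidableEq α] {s : Finset α} {a b : α}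
    (ha : a ∈ s) (hb : b ∈ s) :
    s.image (swap a b) = s := by
  refine (map_eq_image (swap a b).toEmbedding s).symm.trans (map_perm fun c hc => ?_)
  obtain ⟨-, rfl | rfl⟩ := swap_apply_ne_self_iff.mp hc <;> assumption

lemma swap_succ_comp_lt_iff_of_apply_eq {α β : Type*} {D : Finset α} {T : α → ℕ} {i : ℕ}
    {x y : α} (f : α → β) (hT : Set.InjOn T D) (hx : x ∈ D) (hy : y ∈ D)
    (hTx : T x = i) (hTy : T y = i + 1) (hxy : f x ≠ f y) ⦃z u : α⦄
    (hz : z ∈ D) (hu : u ∈ D) (hzu : f z = f u) :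
    swap i (i + 1) (T z) < swap i (i + 1) (T u) ↔ T z < T u := by
  refine swap_succ_lt_swap_succ_iff ?_ ?_
  · rintro ⟨hzi, hui⟩
    rw [← hT hz hx (hzi.trans hTx.symm), ← hT hu hy (hui.trans hTy.symm)] at hxy
    exact hxy hzu
  · rintro ⟨hzi, hui⟩
    rw [← hT hz hy (hzi.trans hTy.symm), ← hT hu hx (hui.trans hTx.symm)] at hxy
    exact hxy hzu.symm

theorem IsSBT.swap_succ_comp {D : Finset (ℕ × ℕ)} {T : ℕ × ℕ → ℕ} {i : ℕ} {x y : ℕ × ℕ}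
    (hT : IsSBT D T) (hx : x ∈ D) (hy : y ∈ D) (hTx : T x = i) (hTy : T y = i + 1)
    (hrow : x.1 ≠ y.1) (hcol : x.2 ≠ y.2) :
    IsSBT D fun z => swap i (i + 1) (T z) := by
  obtain ⟨hinj, himg, hbal⟩ := hT
  have hi : i ∈ D.image T := hTx ▸ mem_image_of_mem T hx
  have hi' : i + 1 ∈ D.image T := hTy ▸ mem_image_of_mem T hy
  have row_lt := swap_succ_comp_lt_iff_of_apply_eq Prod.fst hinj hx hy hTx hTy hrow
  have col_lt := swap_succ_comp_lt_iff_of_apply_eq Prod.snd hinj hx hy hTx hTy hcol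
  refine ⟨(swap i (i + 1)).injective.comp_injOn hinj, ?_, fun z hz => ?_⟩
  · change D.image (swap i (i + 1) ∘ T) = _
    rw [← image_image, image_swap_of_mem hi hi', himg]
  · rw [filter_congr fun u hu => and_congr_right fun hzu =>
          and_congr_right fun _ => row_lt hz hu hzu.symm,
        filter_congr fun u hu => and_congr_right fun hzu =>
          and_congr_right fun _ => col_lt hu hz hzu]
    exact hbal z hz

/-- Exchanging the entries `i` and `i+1` of a standard balanced tableau, when they lie
in different rows and different columns, yields a standard balanced tableau. -/
theorem sbt_commutation (n : ℕ) (w : Equiv.Perm (Fin n)) (T : ℕ × ℕ → ℕ) (i : ℕ)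
    (hT : IsSBT (RotheD n w) T)
    (x y : ℕ × ℕ) (hx : x ∈ RotheD n w) (hy : y ∈ RotheD n w)
    (hTx : T x = i) (hTy : T y = i + 1) (hrow : x.1 ≠ y.1) (hcol : x.2 ≠ y.2) :
    IsSBT (RotheD n w)
      (fun z => if T z = i then i + 1 else if T z = i + 1 then i else T z) := by
  simpa only [swap_apply_def] using hT.swap_succ_comp hx hy hTx hTy hrow hcol
end

section
/- The map φ sending a standard balanced tableau R on D(w) with ℓ cells to the filling of D(w⁻¹) obtained by transposing R and replacing each entry i by ℓ − i + 1 is a well-defined bijection from the set of standard balanced tableaux on D(w) to those on D(w⁻¹), and φ² = id. -/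
/-!
Transposing a diagram exchanges "to the right in its row" with "above in its column", and
replacing each entry `i` of a filling by `ℓ + 1 - i` exchanges "larger" with "smaller". Doing
both turns the balance condition of a cell into the balance condition of the transposed cell
read from the other side, so the flip of a standard balanced tableau on `D` is one on the
transpose of `D`. Since `D(w⁻¹)` is the transpose of `D(w)` and the flip is an involution on
fillings with values in `1, …, ℓ`, it is a bijection.
-/

open Finset

lemma RotheD_inv (n : ℕ) (w : Equiv.Perm (Fin n)) :
    RotheD n w⁻¹ = (RotheD n w).image Prod.swap := by
  ext ⟨a, b⟩
  simp only [RotheD, mem_image, mem_filter, mem_univ, true_and, Prod.exists,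
    Prod.swap_prod_mk, Prod.mk.injEq]
  constructor
  · rintro ⟨i, j, ⟨hij, hw⟩, rfl, rfl⟩
    exact ⟨_, _, ⟨w⁻¹ j, w⁻¹ i, ⟨hw, by simpa using hij⟩, rfl, by simp⟩, rfl, rfl⟩
  · rintro ⟨_, _, ⟨i, j, ⟨hij, hw⟩, rfl, rfl⟩, rfl, rfl⟩
    exact ⟨w j, w i, ⟨hw, by simpa using hij⟩, rfl, by simp⟩

lemma card_RotheD_inv (n : ℕ) (w : Equiv.Perm (Fin n)) :
    (RotheD n w⁻¹).card = (RotheD n w).card := by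
  rw [RotheD_inv, card_image_of_injective _ Prod.swap_injective]

lemma image_swap_RotheD_inv (n : ℕ) (w : Equiv.Perm (Fin n)) :
    (RotheD n w⁻¹).image Prod.swap = RotheD n w := by
  rw [RotheD_inv, image_image, Prod.swap_swap_eq, image_id]

section Swap

variable {α β : Type*} [DecidableEq α] [DecidableEq β]

lemma mem_image_swap_iff {D : Finset (α × β)} {p : β × α} :
    p ∈ D.image Prod.swap ↔ p.swap ∈ D := by
  simp [Prod.swap_eq_iff_eq_swap]

lemma card_filter_image_swap (D : Finset (α × β)) (P : β × α → Prop) [DecidablePred P] :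
    ((D.image Prod.swap).filter P).card = (D.filter fun u => P u.swap).card := by
  rw [filter_image, card_image_of_injective _ Prod.swap_injective]

end Swap

lemma image_const_add_one_tsub_Icc (N : ℕ) : (Icc 1 N).image (N + 1 - ·) = Icc 1 N := by
  ext b
  simp only [mem_image, mem_Icc]
  constructor
  · rintro ⟨a, ha, rfl⟩
    omega
  · intro hb
    exact ⟨N + 1 - b, by omega, by omega⟩

/-- The paper's `φ`, with `N` the number of cells of the diagram. -/
def flipFilling (N : ℕ) (T : ℕ × ℕ → ℕ) (p : ℕ × ℕ) : ℕ := N + 1 - T p.swap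

namespace IsSBT

variable {D : Finset (ℕ × ℕ)} {T : ℕ × ℕ → ℕ}

lemma mem_Icc (h : IsSBT D T) {x : ℕ × ℕ} (hx : x ∈ D) : T x ∈ Icc 1 D.card :=
  h.2.1 ▸ mem_image_of_mem T hx

lemma flipFilling_flipFilling (h : IsSBT D T) {x : ℕ × ℕ} (hx : x ∈ D) :
    flipFilling D.card (flipFilling D.card T) x = T x := by
  have hTx := Finset.mem_Icc.1 (h.mem_Icc hx)
  simp only [flipFilling, Prod.swap_swap]
  omega

lemma image_swap_flipFilling (h : IsSBT D T) :
    IsSBT (D.image Prod.swap) (flipFilling D.card T) := by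
  have hlt : ∀ {x y}, x ∈ D → (D.card + 1 - T x < D.card + 1 - T y ↔ T y < T x) := fun hx =>
    tsub_lt_tsub_iff_left_of_le (by have := Finset.mem_Icc.1 (h.mem_Icc hx); omega)
  refine ⟨?_, ?_, fun x hx => ?_⟩
  · intro x hx y hy hxy
    have hx' := mem_image_swap_iff.1 hx
    have hy' := mem_image_swap_iff.1 hy
    have hTx := Finset.mem_Icc.1 (h.mem_Icc hx')
    have hTy := Finset.mem_Icc.1 (h.mem_Icc hy')
    have hT : T x.swap = T y.swap := by simp only [flipFilling] at hxy; omega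
    exact Prod.swap_injective (h.1 hx' hy' hT)
  · calc (D.image Prod.swap).image (flipFilling D.card T)
        = (D.image T).image (D.card + 1 - ·) := by simp only [image_image]; rfl
      _ = _ := by
        rw [h.2.1, image_const_add_one_tsub_Icc, card_image_of_injective _ Prod.swap_injective]
  · have hx' := mem_image_swap_iff.1 hx
    rw [card_filter_image_swap, card_filter_image_swap]
    simp only [flipFilling, Prod.swap_swap, Prod.fst_swap, Prod.snd_swap]
    calc _ = (D.filter fun y => y.2 = x.1 ∧ x.2 < y.1 ∧ T y < T x.swap).card := by
          refine congrArg card (filter_congr fun u _ => ?_)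
          rw [hlt hx']
      _ = (D.filter fun y => y.1 = x.2 ∧ x.1 < y.2 ∧ T x.swap < T y).card :=
          (h.2.2 _ hx').symm
      _ = _ := by
          refine congrArg card (filter_congr fun u hu => ?_)
          rw [hlt hu]

end IsSBT

/-- The flip map `φ` — transposing a standard balanced tableau on `D(w)` and replacing
each entry `i` by `ℓ - i + 1` — is a well-defined bijection from standard balanced
tableaux on `D(w)` to those on `D(w⁻¹)`, and `φ² = id`. -/
theorem flip_bijection (n : ℕ) (w : Equiv.Perm (Fin n)) :
    (∀ T : ℕ × ℕ → ℕ, IsSBT (RotheD n w) T →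
      IsSBT (RotheD n w⁻¹) (fun p => (RotheD n w).card + 1 - T (p.2, p.1))) ∧
    (∀ T : ℕ × ℕ → ℕ, IsSBT (RotheD n w) T → ∀ x ∈ RotheD n w,
      (RotheD n w⁻¹).card + 1 - ((RotheD n w).card + 1 - T ((x.2, x.1).2, (x.2, x.1).1))
        = T x) ∧
    (∀ S : ℕ × ℕ → ℕ, IsSBT (RotheD n w⁻¹) S → ∃ T : ℕ × ℕ → ℕ,
      IsSBT (RotheD n w) T ∧
      ∀ y ∈ RotheD n w⁻¹, S y = (RotheD n w).card + 1 - T (y.2, y.1)) := by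
  have hcard := card_RotheD_inv n w
  refine ⟨fun T hT => RotheD_inv n w ▸ hT.image_swap_flipFilling, fun T hT x hx => ?_,
    fun S hS => ?_⟩
  · rw [hcard]
    exact hT.flipFilling_flipFilling hx
  · refine ⟨flipFilling (RotheD n w⁻¹).card S, ?_, fun y hy => ?_⟩
    · exact image_swap_RotheD_inv n w ▸ hS.image_swap_flipFilling
    · rw [← hcard]
      exact (hS.flipFilling_flipFilling hy).symm
end

section
/- For a standard balanced tableau R on the Rothe diagram of w, the inversion number inv(R) (the number of pairs i < j with i in a strictly higher row and a different column than j) is zero if and only if R is the super-Yamanouchi tableau, i.e., its reverse row reading word (right to left from bottom row to top row) is the identity 1, 2, ..., ℓ(w). -/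
/-- The inversion number of a tableau on `D`: the number of pairs of entries `i < j`
with `i` in a strictly higher row and a different column than `j`. -/
def invT (D : Finset (ℕ × ℕ)) (T : ℕ × ℕ → ℕ) : ℕ :=
  ((D ×ˢ D).filter fun p => T p.1 < T p.2 ∧ p.2.1 < p.1.1 ∧ p.1.2 ≠ p.2.2).card


/-- The tableau `T` on `D` is super-Yamanouchi: its reverse row reading word (right to
left along rows, from the bottom row up) is the identity `1, 2, …, |D|`; equivalently,
entries compare according to the reading order. -/
def IsSuperYT (D : Finset (ℕ × ℕ)) (T : ℕ × ℕ → ℕ) : Prop :=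
  ∀ x ∈ D, ∀ y ∈ D, (T x < T y ↔ (x.1 < y.1 ∨ (x.1 = y.1 ∧ y.2 < x.2)))

def IsBalanced (D : Finset (ℕ × ℕ)) (T : ℕ × ℕ → ℕ) : Prop :=
  ∀ x ∈ D, (D.filter fun y => y.1 = x.1 ∧ x.2 < y.2 ∧ T x < T y).card
    = (D.filter fun y => y.2 = x.2 ∧ x.1 < y.1 ∧ T y < T x).card

lemma IsSBT.isBalanced {D : Finset (ℕ × ℕ)} {T : ℕ × ℕ → ℕ} (hT : IsSBT D T) :
    IsBalanced D T :=
  hT.2.2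

section

variable {D : Finset (ℕ × ℕ)} {T : ℕ × ℕ → ℕ}

lemma invT_eq_zero_iff :
    invT D T = 0 ↔ ∀ x ∈ D, ∀ y ∈ D, y.1 < x.1 → x.2 ≠ y.2 → T y ≤ T x := by
  simp only [invT, Finset.card_eq_zero, Finset.filter_eq_empty_iff, Finset.mem_product]
  exact ⟨fun h x hx y hy hrow hcol => not_lt.mp fun hlt => @h (x, y) ⟨hx, hy⟩ ⟨hlt, hrow, hcol⟩,
    fun h p hp hlt => (h p.1 hp.1 p.2 hp.2 hlt.2.1 hlt.2.2).not_gt hlt.1⟩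

lemma isSuperYT_iff :
    IsSuperYT D T ↔
      ∀ x ∈ D, ∀ y ∈ D, x.1 < y.1 ∨ (x.1 = y.1 ∧ y.2 < x.2) → T x < T y := by
  refine ⟨fun h x hx y hy => (h x hx y hy).2, fun h x hx y hy => ⟨fun hlt => ?_, h x hx y hy⟩⟩
  rcases lt_trichotomy x.1 y.1 with hrow | hrow | hrow
  · exact Or.inl hrow
  · rcases lt_trichotomy y.2 x.2 with hcol | hcol | hcol
    · exact Or.inr ⟨hrow, hcol⟩
    · exact (lt_irrefl _ (Prod.ext hrow hcol.symm ▸ hlt)).elim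
    · exact absurd (h y hy x hx (Or.inr ⟨hrow.symm, hcol⟩)) hlt.asymm
  · exact absurd (h y hy x hx (Or.inl hrow)) hlt.asymm

lemma lt_of_fst_lt_of_invT_eq_zero (hinj : Set.InjOn T D) (hbal : IsBalanced D T)
    (h0 : invT D T = 0) {x y : ℕ × ℕ} (hx : x ∈ D) (hy : y ∈ D) (hrow : x.1 < y.1) :
    T x < T y := by
  rw [invT_eq_zero_iff] at h0
  by_contra! hle
  have hyx : T y < T x := hle.lt_of_ne (hinj.ne hy hx fun h => hrow.ne' (congrArg Prod.fst h))
  by_cases hcol : x.2 = y.2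
  · have habove : 0 < (D.filter fun z => z.2 = x.2 ∧ x.1 < z.1 ∧ T z < T x).card :=
      Finset.card_pos.mpr ⟨y, Finset.mem_filter.mpr ⟨hy, hcol.symm, hrow, hyx⟩⟩
    obtain ⟨z, hz⟩ := Finset.card_pos.mp ((hbal x hx).symm ▸ habove)
    obtain ⟨hzD, hzrow, hzcol, hxz⟩ := Finset.mem_filter.mp hz
    exact (h0 y hy z hzD (hzrow ▸ hrow) (hcol ▸ hzcol.ne)).not_gt (hyx.trans hxz)
  · exact (h0 y hy x hx hrow (Ne.symm hcol)).not_gt hyx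

lemma lt_of_fst_eq_of_snd_lt_of_invT_eq_zero (hinj : Set.InjOn T D) (hbal : IsBalanced D T)
    (h0 : invT D T = 0) {x y : ℕ × ℕ} (hx : x ∈ D) (hy : y ∈ D) (hrow : x.1 = y.1)
    (hcol : y.2 < x.2) : T x < T y := by
  by_contra! hle
  have hyx : T y < T x := hle.lt_of_ne (hinj.ne hy hx fun h => hcol.ne (congrArg Prod.snd h))
  have hright : 0 < (D.filter fun z => z.1 = y.1 ∧ y.2 < z.2 ∧ T y < T z).card :=
    Finset.card_pos.mpr ⟨x, Finset.mem_filter.mpr ⟨hx, hrow, hcol, hyx⟩⟩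
  obtain ⟨z, hz⟩ := Finset.card_pos.mp (hbal y hy ▸ hright)
  obtain ⟨hzD, -, hzrow, hzy⟩ := Finset.mem_filter.mp hz
  exact hzy.not_gt (lt_of_fst_lt_of_invT_eq_zero hinj hbal h0 hy hzD hzrow)

end

/-- A standard balanced tableau has inversion number zero if and only if it is the
super-Yamanouchi tableau. -/
theorem invT_eq_zero_iff_superYamanouchi (n : ℕ) (w : Equiv.Perm (Fin n))
    (T : ℕ × ℕ → ℕ) (hT : IsSBT (RotheD n w) T) :
    invT (RotheD n w) T = 0 ↔ IsSuperYT (RotheD n w) T := by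
  rw [isSuperYT_iff]
  constructor
  · rintro h0 x hx y hy (hrow | ⟨hrow, hcol⟩)
    · exact lt_of_fst_lt_of_invT_eq_zero hT.1 hT.isBalanced h0 hx hy hrow
    · exact lt_of_fst_eq_of_snd_lt_of_invT_eq_zero hT.1 hT.isBalanced h0 hx hy hrow hcol
  · intro hY
    exact invT_eq_zero_iff.mpr fun x hx y hy hrow _ => (hY y hy x hx (Or.inl hrow)).le
end

section
/- If R is a standard balanced tableau with inv(R) > 0, then there exist entries i and i+1 with i in a strictly higher row than i+1. -/
/-! In a standard filling every value between two entries is itself an entry, so one can walk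
from the entry `i` to the entry `j` one value at a time. If `i < j` and `i` lies strictly above
`j`, the row cannot weakly increase at every step of this walk, so it drops at some step
`k ↦ k + 1`. -/

theorem exists_succ_lt_of_le_of_lt {α : Type*} [LinearOrder α] {f : ℕ → α} {i j : ℕ}
    (hij : i ≤ j) (h : f j < f i) : ∃ k, i ≤ k ∧ k < j ∧ f (k + 1) < f k := by
  induction j, hij using Nat.le_induction with
  | base => exact absurd h (lt_irrefl _)
  | succ j hij ih =>
    by_cases hj : f (j + 1) < f j
    · exact ⟨j, hij, j.lt_succ_self, hj⟩
    · obtain ⟨k, hik, hkj, hk⟩ := ih ((not_lt.1 hj).trans_lt h)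
      exact ⟨k, hik, hkj.trans j.lt_succ_self, hk⟩

open Function in
theorem exists_succ_descent_of_injOn_of_ordConnected {α β : Type*} [LinearOrder β]
    {D : Set α} {T : α → ℕ} (r : α → β) (hinj : D.InjOn T) (hconn : (T '' D).OrdConnected)
    {a b : α} (ha : a ∈ D) (hb : b ∈ D) (hT : T a ≤ T b) (hr : r b < r a) :
    ∃ x ∈ D, ∃ y ∈ D, T y = T x + 1 ∧ r y < r x := by
  have : Nonempty α := ⟨a⟩
  have htaken : ∀ k, T a ≤ k → k ≤ T b → ∃ c ∈ D, T c = k := fun k hak hkb =>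
    hconn.out (Set.mem_image_of_mem T ha) (Set.mem_image_of_mem T hb) ⟨hak, hkb⟩
  have hdrop : r (invFunOn T D (T b)) < r (invFunOn T D (T a)) := by
    rwa [hinj.leftInvOn_invFunOn ha, hinj.leftInvOn_invFunOn hb]
  obtain ⟨k, hak, hkb, hk⟩ := exists_succ_lt_of_le_of_lt (f := r ∘ invFunOn T D) hT hdrop
  have hx := htaken k hak hkb.le
  have hy := htaken (k + 1) (hak.trans k.le_succ) hkb
  exact ⟨_, invFunOn_mem hx, _, invFunOn_mem hy, by rw [invFunOn_eq hy, invFunOn_eq hx], hk⟩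

/-- A standard balanced tableau with positive inversion number has consecutive entries
`i` and `i+1` with `i` in a strictly higher row than `i+1`. -/
theorem exists_consecutive_descent (n : ℕ) (w : Equiv.Perm (Fin n))
    (T : ℕ × ℕ → ℕ) (hT : IsSBT (RotheD n w) T) (hpos : 0 < invT (RotheD n w) T) :
    ∃ x ∈ RotheD n w, ∃ y ∈ RotheD n w, T y = T x + 1 ∧ y.1 < x.1 := by
  obtain ⟨hinj, himg, -⟩ := hT
  obtain ⟨⟨a, b⟩, hab⟩ := Finset.card_pos.1 hpos
  rw [Finset.mem_filter, Finset.mem_product] at hab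
  obtain ⟨⟨ha, hb⟩, hTab, hrow, -⟩ := hab
  have hconn : (T '' ↑(RotheD n w)).OrdConnected := by
    rw [← Finset.coe_image, himg, Finset.coe_Icc]
    exact Set.ordConnected_Icc
  exact exists_succ_descent_of_injOn_of_ordConnected Prod.fst hinj hconn ha hb hTab.le hrow
end
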